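/- arXiv:1612.08904 — 5 statements merged into one kernel-verified Lean document; each statement's English description precedes it below -/
import Mathlib

section
/- Let G be a bipartite graph with a matching M, let C be an M-cycle of length 2n, and let P = P[x,y] be an M-path in G − V(C). If the number of edges of G between {x, y} and V(C) exceeds n, then the subgraph of G induced on V(P) ∪ V(C) contains an M-cycle of length |P| + 2i for every i with 1 ≤ i ≤ n. -/
/-!
Since `M` is a matching and exactly half of the `2n` edges of `C` lie in `M`, the edges of `C`
alternate in and out of `M`. As `G` is bipartite and `P` has odd length, all neighbours of `y`
on `C` lie on one side and all neighbours of `x` on the other; after possibly reversing `P`,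
every neighbour of `y` on `C` is the tail (for a fixed orientation of `C`) of an `M`-edge of `C`
and every neighbour of `x` the tail of a non-`M`-edge. Moving each neighbour of `y` forward by
`2i - 1` steps lands on the tail of a non-`M`-edge; there are only `n` such tails and more than
`n` neighbours in total, so some neighbour `v` of `y` is followed `2i - 1` steps later by a
neighbour `v'` of `x`. Then `P`, the edge `yv`, the arc of `C` from `v` to `v'` and the edge
`v'x` form an `M`-cycle of length `|P| + 2i`.
-/

open Finset Function

theorem List.countP_eq_of_getElem_iff_even {α : Type*} (p : α → Bool) :
    ∀ l : List α, (∀ i (h : i < l.length), p l[i] ↔ Even i) →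
      l.countP p = (l.length + 1) / 2
  | [], _ => by simp
  | [a], h => by simpa using h 0
  | a :: b :: l, h => by
    have ha : p a := (h 0 (by simp)).2 Even.zero
    have hb : ¬ p b := fun hb => Nat.not_even_one ((h 1 (by simp)).1 hb)
    have hl := countP_eq_of_getElem_iff_even p l fun i hi => by
      have h' := h (i + 1 + 1) (by simpa using hi)
      rw [List.getElem_cons_succ, List.getElem_cons_succ] at h'
      simpa [Nat.even_add_one] using h'
    simp [ha, hb, hl]
    omega

namespace Nat
variable {p : ℕ → Prop} [DecidablePred p]

theorem count_shift_of_periodic {a : ℕ} (hp : Periodic p a) (t : ℕ) :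
    count (fun k => p (t + k)) a = count p a := by
  have h1 := count_add p t a
  have h2 := count_add' p t a
  have hp' : ∀ k, p (k + a) = p k := hp
  simp only [hp'] at h2
  rw [h1] at h2
  exact Nat.add_left_cancel h2

theorem count_two_mul_le_of_not_and_succ (hp : ∀ t, ¬(p t ∧ p (t + 1))) (m : ℕ) :
    count p (2 * m) ≤ m := by
  induction m generalizing p with
  | zero => simp
  | succ m ih =>
    rw [show 2 * (m + 1) = 2 + 2 * m by ring, count_add]
    have h2 : count p 2 ≤ 1 := by
      have := hp 0
      simp only [count_succ, count_zero]
      split_ifs <;> simp_all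
    have := @ih (fun k => p (2 + k)) _ fun t => by simpa [add_assoc] using hp (2 + t)
    omega

theorem or_succ_of_periodic_of_count_eq {n : ℕ} (hn : 0 < n) (hper : Periodic p (2 * n))
    (hcount : count p (2 * n) = n) (hp : ∀ t, ¬(p t ∧ p (t + 1))) (t : ℕ) :
    p t ∨ p (t + 1) := by
  -- The period starting at `t` splits into `n` pairs of consecutive places, each with at most
  -- one hit; so all of them, in particular the first one, hold exactly one.
  have hshift := count_shift_of_periodic hper t
  rw [hcount, show 2 * n = 2 + 2 * (n - 1) by omega, count_add] at hshift
  have hrest := count_two_mul_le_of_not_and_succ (p := fun k => p (t + (2 + k)))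
    (fun s => by simpa [add_assoc] using hp (t + (2 + s))) (n - 1)
  by_contra! h
  simp [count_succ, h.1, h.2] at hshift
  omega

end Nat

namespace SimpleGraph.Walk
variable {V : Type*} {G : SimpleGraph V}

lemma end_mem_iff_of_forall_adj {X : Set V} (hX : ∀ a b, G.Adj a b → (a ∈ X ↔ b ∉ X))
    {u v : V} (p : G.Walk u v) : v ∈ X ↔ (u ∈ X ↔ Even p.length) := by
  induction p with
  | nil => simp
  | cons h p ih =>
    rw [ih, length_cons, Nat.even_add_one, hX _ _ h]
    tauto

section OfSeq
variable (f : ℕ → V) (hf : ∀ j, G.Adj (f j) (f (j + 1)))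

def ofSeq : (ℓ : ℕ) → G.Walk (f 0) (f ℓ)
  | 0 => nil
  | ℓ + 1 => (ofSeq ℓ).concat (hf ℓ)

variable {f hf}

@[simp]
lemma length_ofSeq (ℓ : ℕ) : (ofSeq f hf ℓ).length = ℓ := by
  induction ℓ with
  | zero => rfl
  | succ ℓ ih => simp [ofSeq, ih]

lemma getVert_ofSeq {ℓ t : ℕ} (ht : t ≤ ℓ) : (ofSeq f hf ℓ).getVert t = f t := by
  induction ℓ with
  | zero => simp_all [ofSeq]
  | succ ℓ ih =>
    rw [ofSeq, concat_eq_append, getVert_append']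
    split_ifs with h
    · exact ih (by simpa using h)
    · obtain rfl : t = ℓ + 1 := by simp only [length_ofSeq] at h; omega
      simp

lemma getElem_edges_ofSeq {ℓ t : ℕ} (h : t < (ofSeq f hf ℓ).edges.length) :
    (ofSeq f hf ℓ).edges[t] = s(f t, f (t + 1)) := by
  simp only [length_edges, length_ofSeq] at h
  rw [getElem_edges, getVert_ofSeq h.le, getVert_ofSeq h]

lemma isPath_ofSeq {ℓ : ℕ} (hinj : Set.InjOn f (Set.Iic ℓ)) : (ofSeq f hf ℓ).IsPath := by
  rw [← IsPath.getVert_injOn_iff]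
  intro s hs t ht hst
  simp only [Set.mem_ofPred_eq, length_ofSeq] at hs ht
  rw [getVert_ofSeq hs, getVert_ofSeq ht] at hst
  exact hinj hs ht hst

lemma exists_eq_of_mem_support_ofSeq {ℓ : ℕ} {z : V} (hz : z ∈ (ofSeq f hf ℓ).support) :
    ∃ t ≤ ℓ, f t = z := by
  obtain ⟨t, rfl, ht⟩ := mem_support_iff_exists_getVert.mp hz
  rw [length_ofSeq] at ht
  exact ⟨t, ht, (getVert_ofSeq ht).symm⟩

end OfSeq

section CycleVert
variable {u : V} (C : G.Walk u u)

def cycleVert (j : ℕ) : V := C.getVert (j % C.length)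

def cycleEdge (j : ℕ) : Sym2 V := s(C.cycleVert j, C.cycleVert (j + 1))

variable {C}

lemma cycleVert_eq_getVert {j : ℕ} (hj : j ≤ C.length) : C.cycleVert j = C.getVert j := by
  rcases hj.lt_or_eq with hj | rfl
  · rw [cycleVert, Nat.mod_eq_of_lt hj]
  · rw [cycleVert, Nat.mod_self, getVert_zero, getVert_length]

lemma cycleVert_mod (j : ℕ) : C.cycleVert (j % C.length) = C.cycleVert j := by
  rw [cycleVert, Nat.mod_mod, cycleVert]

lemma cycleVert_mem_support (j : ℕ) : C.cycleVert j ∈ C.support := getVert_mem_support _ _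

lemma adj_cycleVert_succ (hC : C.length ≠ 0) (j : ℕ) :
    G.Adj (C.cycleVert j) (C.cycleVert (j + 1)) := by
  have hj : j % C.length < C.length := Nat.mod_lt _ (Nat.pos_of_ne_zero hC)
  rw [← cycleVert_mod (j + 1), ← Nat.mod_add_mod, cycleVert_mod, cycleVert_eq_getVert hj,
    ← cycleVert_mod j, cycleVert_eq_getVert hj.le]
  exact C.adj_getVert_succ hj

lemma cycleEdge_mod (j : ℕ) : C.cycleEdge (j % C.length) = C.cycleEdge j := by
  rw [cycleEdge, cycleEdge, cycleVert_mod, ← cycleVert_mod (j + 1), ← cycleVert_mod (_ + 1),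
    Nat.mod_add_mod]

lemma edges_eq_map_cycleEdge : C.edges = (List.range C.length).map C.cycleEdge := by
  refine List.ext_getElem (by simp) fun t ht _ => ?_
  rw [length_edges] at ht
  rw [getElem_edges, List.getElem_map, List.getElem_range, cycleEdge,
    cycleVert_eq_getVert ht.le, cycleVert_eq_getVert ht]

lemma mem_support_iff_exists_cycleVert (hC : C.length ≠ 0) {z : V} :
    z ∈ C.support ↔ ∃ j < C.length, C.cycleVert j = z := by
  refine ⟨fun hz => ?_, fun ⟨j, _, hj⟩ => hj ▸ cycleVert_mem_support j⟩
  obtain ⟨t, rfl, ht⟩ := mem_support_iff_exists_getVert.mp hz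
  exact ⟨t % C.length, Nat.mod_lt _ (Nat.pos_of_ne_zero hC), by
    rw [cycleVert_mod, cycleVert_eq_getVert ht]⟩

lemma cycleVert_mem_iff_of_forall_adj {X : Set V} (hX : ∀ a b, G.Adj a b → (a ∈ X ↔ b ∉ X))
    (hC : C.length ≠ 0) (j : ℕ) : C.cycleVert j ∈ X ↔ (C.cycleVert 0 ∈ X ↔ Even j) := by
  induction j with
  | zero => simp
  | succ j ih =>
    have := hX _ _ (adj_cycleVert_succ hC j)
    rw [Nat.even_add_one]
    tauto

lemma IsCycle.cycleVert_eq_cycleVert_iff (hC : C.IsCycle) {p q : ℕ} :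
    C.cycleVert p = C.cycleVert q ↔ p % C.length = q % C.length := by
  refine ⟨fun h => hC.getVert_injOn' ?_ ?_ h, fun h => by rw [cycleVert, h, cycleVert]⟩ <;>
  · have := hC.three_le_length
    simp only [Set.mem_ofPred_eq]
    have := Nat.mod_lt p (by omega : 0 < C.length)
    have := Nat.mod_lt q (by omega : 0 < C.length)
    omega

lemma IsCycle.ncard_setOf_mem_support_and (hC : C.IsCycle) (P : V → Prop) [DecidablePred P] :
    {z | z ∈ C.support ∧ P z}.ncard = #{j ∈ range C.length | P (C.cycleVert j)} := by
  have hL : C.length ≠ 0 := by have := hC.three_le_length; omega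
  have himage : {z | z ∈ C.support ∧ P z} =
      C.cycleVert '' ↑({j ∈ range C.length | P (C.cycleVert j)}) := by
    ext z
    simp only [Set.mem_ofPred_eq, mem_support_iff_exists_cycleVert hL, coe_filter, mem_range,
      Set.mem_image]
    constructor
    · rintro ⟨⟨j, hj, rfl⟩, hP⟩
      exact ⟨j, ⟨hj, hP⟩, rfl⟩
    · rintro ⟨j, ⟨hj, hP⟩, rfl⟩
      exact ⟨⟨j, hj, rfl⟩, hP⟩
  rw [himage, Set.InjOn.ncard_image, Set.ncard_coe_finset]
  intro p hp q hq hpq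
  simp only [coe_filter, mem_range, Set.mem_ofPred_eq] at hp hq
  rwa [hC.cycleVert_eq_cycleVert_iff, Nat.mod_eq_of_lt hp.1, Nat.mod_eq_of_lt hq.1] at hpq

end CycleVert

section MPath
variable {M : Finset (Sym2 V)}

variable (M) in
def IsMPath {u v : V} (p : G.Walk u v) : Prop :=
  p.IsPath ∧ Odd p.length ∧ ∀ i (h : i < p.edges.length), p.edges[i] ∈ M ↔ Even i

lemma IsMPath.reverse {u v : V} {p : G.Walk u v} (hp : IsMPath M p) : IsMPath M p.reverse := by
  obtain ⟨hpath, hodd, halt⟩ := hp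
  refine ⟨hpath.reverse, by simpa using hodd, fun i hi => ?_⟩
  simp only [edges_reverse, List.length_reverse] at hi
  simp only [edges_reverse, List.getElem_reverse]
  rw [halt _ (by omega)]
  rw [length_edges, Nat.odd_iff] at *
  simp only [Nat.even_iff]
  omega

lemma IsMPath.ne {u v : V} {p : G.Walk u v} (hp : IsMPath M p) : u ≠ v := by
  rintro rfl
  have := hp.2.1
  rw [(isPath_iff_nil.mp hp.1).length_eq_zero] at this
  simp at this

lemma IsMPath.mem_support_of_mk_start_mem
    (hM : ∀ v, ∀ e ∈ M, ∀ f ∈ M, v ∈ e → v ∈ f → e = f) {u v z : V} {p : G.Walk u v}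
    (hp : IsMPath M p) (hz : s(u, z) ∈ M) : z ∈ p.support := by
  have h0 : 0 < p.edges.length := by rw [length_edges]; exact hp.2.1.pos
  have hfirst := (hp.2.2 0 h0).2 Even.zero
  rw [getElem_edges, getVert_zero] at hfirst
  rw [Sym2.congr_right.mp (hM u _ hz _ hfirst (Sym2.mem_mk_left _ _) (Sym2.mem_mk_left _ _))]
  exact getVert_mem_support _ _

lemma IsMPath.mem_support_of_mk_end_mem
    (hM : ∀ v, ∀ e ∈ M, ∀ f ∈ M, v ∈ e → v ∈ f → e = f) {u v z : V} {p : G.Walk u v}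
    (hp : IsMPath M p) (hz : s(v, z) ∈ M) : z ∈ p.support := by
  simpa using hp.reverse.mem_support_of_mk_start_mem hM hz

end MPath

section CycleOfPaths
variable {x y a c : V} (p : G.Walk x y) (q : G.Walk a c) (hya : G.Adj y a) (hcx : G.Adj c x)

def cycleOfPaths : G.Walk c c := cons hcx (p.append (cons hya q))

lemma support_cycleOfPaths :
    (cycleOfPaths p q hya hcx).support = c :: (p.support ++ q.support) := by
  simp [cycleOfPaths, support_append]

lemma edges_cycleOfPaths :
    (cycleOfPaths p q hya hcx).edges = s(c, x) :: (p.edges ++ s(y, a) :: q.edges) := by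
  simp [cycleOfPaths, edges_append]

lemma length_cycleOfPaths : (cycleOfPaths p q hya hcx).length = p.length + q.length + 2 := by
  simp [cycleOfPaths]
  omega

variable {p q}

lemma IsPath.isCycle_cycleOfPaths (hp : p.IsPath) (hq : q.IsPath) (hxy : x ≠ y)
    (hdisj : ∀ z ∈ p.support, z ∉ q.support) : (cycleOfPaths p q hya hcx).IsCycle := by
  rw [cycleOfPaths, cons_isCycle_iff]
  constructor
  · rw [isPath_def, support_append, support_cons, List.tail_cons]
    exact hp.support_nodup.append hq.support_nodup fun z hz hz' => hdisj z hz hz'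
  · rw [edges_append, edges_cons, List.mem_append, List.mem_cons, Sym2.eq_iff]
    rintro (h | (⟨rfl, -⟩ | ⟨-, h⟩) | h)
    · exact hdisj c (p.fst_mem_support_of_mem_edges h) q.end_mem_support
    · exact hdisj c p.end_mem_support q.end_mem_support
    · exact hxy h
    · exact hdisj x p.start_mem_support (q.snd_mem_support_of_mem_edges h)

end CycleOfPaths

section MCycle
variable [DecidableEq V] {M : Finset (Sym2 V)}

variable (M) in
def IsMCycle {u : V} (C : G.Walk u u) : Prop :=
  C.IsCycle ∧ 2 * #(C.edges.toFinset ∩ M) = C.length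

lemma IsCycle.count_cycleEdge_mem {u : V} {C : G.Walk u u} (hC : C.IsCycle) :
    Nat.count (C.cycleEdge · ∈ M) C.length = #(C.edges.toFinset ∩ M) := by
  rw [← filter_mem_eq_inter, hC.edges_nodup.card_eq_countP, edges_eq_map_cycleEdge,
    List.countP_map, Nat.count]
  rfl

lemma IsMCycle.cycleEdge_succ_mem_iff (hM : ∀ v, ∀ e ∈ M, ∀ f ∈ M, v ∈ e → v ∈ f → e = f)
    {u : V} {C : G.Walk u u} (hC : IsMCycle M C) (t : ℕ) :
    C.cycleEdge (t + 1) ∈ M ↔ C.cycleEdge t ∉ M := by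
  have hL := hC.1.three_le_length
  have hsep : ∀ s, ¬(C.cycleEdge s ∈ M ∧ C.cycleEdge (s + 1) ∈ M) := by
    rintro s ⟨hs, hs'⟩
    have heq := hM _ _ hs _ hs' (Sym2.mem_mk_right _ _) (Sym2.mem_mk_left _ _)
    rcases Sym2.eq_iff.mp heq with ⟨h, -⟩ | ⟨h, -⟩
    · exact (adj_cycleVert_succ (by omega) s).ne h
    · rw [hC.1.cycleVert_eq_cycleVert_iff] at h
      have h2 := Nat.sub_mod_eq_zero_of_mod_eq h.symm
      rw [show s + 1 + 1 - s = 2 by omega, Nat.mod_eq_of_lt (by omega)] at h2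
      omega
  have hper : Periodic (C.cycleEdge · ∈ M) (2 * #(C.edges.toFinset ∩ M)) := fun s => by
    beta_reduce
    rw [hC.2, ← cycleEdge_mod, Nat.add_mod_right, cycleEdge_mod]
  have := Nat.or_succ_of_periodic_of_count_eq (by have := hC.2; omega) hper
    (by rw [hC.2, hC.1.count_cycleEdge_mem]) hsep t
  have := hsep t
  tauto

lemma IsMCycle.cycleEdge_add_mem_iff (hM : ∀ v, ∀ e ∈ M, ∀ f ∈ M, v ∈ e → v ∈ f → e = f)
    {u : V} {C : G.Walk u u} (hC : IsMCycle M C) (s t : ℕ) :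
    C.cycleEdge (s + t) ∈ M ↔ (C.cycleEdge s ∈ M ↔ Even t) := by
  induction t with
  | zero => simp
  | succ t ih =>
    rw [← add_assoc, hC.cycleEdge_succ_mem_iff hM, ih, Nat.even_add_one]
    tauto

lemma IsMCycle.exists_cycleEdge_mem_iff (hM : ∀ v, ∀ e ∈ M, ∀ f ∈ M, v ∈ e → v ∈ f → e = f)
    {X : Set V} (hX : ∀ a b, G.Adj a b → (a ∈ X ↔ b ∉ X)) {u : V} {C : G.Walk u u}
    (hC : IsMCycle M C) : ∃ c : Prop, ∀ j, C.cycleEdge j ∈ M ↔ (C.cycleVert j ∈ X ↔ c) := by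
  have hL : C.length ≠ 0 := by have := hC.1.three_le_length; omega
  refine ⟨C.cycleEdge 0 ∈ M ↔ C.cycleVert 0 ∈ X, fun j => ?_⟩
  have hE := hC.cycleEdge_add_mem_iff hM 0 j
  have hV := cycleVert_mem_iff_of_forall_adj hX hL j
  rw [zero_add] at hE
  tauto

lemma IsMPath.countP_edges {u v : V} {p : G.Walk u v} (hp : IsMPath M p) :
    p.edges.countP (· ∈ M) = (p.length + 1) / 2 := by
  rw [← length_edges]
  exact List.countP_eq_of_getElem_iff_even _ _ (by simpa using hp.2.2)

lemma IsMPath.isMCycle_cycleOfPaths (hM : ∀ v, ∀ e ∈ M, ∀ f ∈ M, v ∈ e → v ∈ f → e = f)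
    {x y a c : V} {p : G.Walk x y} {q : G.Walk a c} (hya : G.Adj y a) (hcx : G.Adj c x)
    (hp : IsMPath M p) (hq : IsMPath M q) (hdisj : ∀ z ∈ p.support, z ∉ q.support) :
    IsMCycle M (cycleOfPaths p q hya hcx) := by
  have hcyc := hp.1.isCycle_cycleOfPaths hya hcx hq.1 hp.ne hdisj
  refine ⟨hcyc, ?_⟩
  have hcx_notMem : s(c, x) ∉ M := fun h =>
    hdisj c (hp.mem_support_of_mk_start_mem hM (Sym2.eq_swap ▸ h)) q.end_mem_support
  have hya_notMem : s(y, a) ∉ M := fun h =>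
    hdisj a (hp.mem_support_of_mk_end_mem hM h) q.start_mem_support
  rw [← filter_mem_eq_inter, hcyc.edges_nodup.card_eq_countP, edges_cycleOfPaths,
    List.countP_cons_of_neg, List.countP_append, List.countP_cons_of_neg, hp.countP_edges,
    hq.countP_edges, length_cycleOfPaths]
  · have := hp.2.1
    have := hq.2.1
    rw [Nat.odd_iff] at *
    omega
  · simpa using hya_notMem
  · simpa using hcx_notMem

theorem IsMCycle.exists_isMCycle_of_lt_ncard
    (hM : ∀ v, ∀ e ∈ M, ∀ f ∈ M, v ∈ e → v ∈ f → e = f) {w x y : V} {C : G.Walk w w}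
    (hC : IsMCycle M C) {P : G.Walk x y} (hP : IsMPath M P)
    (hdisj : ∀ z ∈ P.support, z ∉ C.support)
    (hx : ∀ j, G.Adj x (C.cycleVert j) → C.cycleEdge j ∉ M)
    (hy : ∀ j, G.Adj y (C.cycleVert j) → C.cycleEdge j ∈ M)
    (hcnt : C.length < 2 * ({z | z ∈ C.support ∧ G.Adj x z}.ncard
      + {z | z ∈ C.support ∧ G.Adj y z}.ncard))
    {i : ℕ} (hi : 1 ≤ i) (hiC : 2 * i ≤ C.length) :
    ∃ (u : V) (D : G.Walk u u), IsMCycle M D ∧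
      (∀ z ∈ D.support, z ∈ P.support ∨ z ∈ C.support) ∧ D.length = P.length + 1 + 2 * i := by
  classical
  have hL : C.length ≠ 0 := by have := hC.1.three_le_length; omega
  have hS : 2 * #{j ∈ range C.length | C.cycleEdge j ∉ M} = C.length := by
    have := card_filter_add_card_filter_not (s := range C.length) (C.cycleEdge · ∈ M)
    rw [← Nat.count_eq_card_filter_range, hC.1.count_cycleEdge_mem, card_range] at this
    have := hC.2
    omega
  rw [hC.1.ncard_setOf_mem_support_and, hC.1.ncard_setOf_mem_support_and] at hcnt
  set S := {j ∈ range C.length | C.cycleEdge j ∉ M}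
  set Ix := {j ∈ range C.length | G.Adj x (C.cycleVert j)}
  set Iy := {j ∈ range C.length | G.Adj y (C.cycleVert j)}
  have hodd : Odd (2 * i - 1) := ⟨i - 1, by omega⟩
  have hIx : Ix ⊆ S := fun j hj => by
    simp only [Ix, S, mem_filter] at hj ⊢
    exact ⟨hj.1, hx j hj.2⟩
  -- shifting by the odd number `2i - 1` turns `M`-edges of `C` into non-`M`-edges
  have hIy : Iy.image (fun j => (j + (2 * i - 1)) % C.length) ⊆ S := by
    simp only [subset_iff, mem_image, Iy, S, mem_filter, mem_range]
    rintro _ ⟨j, ⟨-, hj⟩, rfl⟩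
    refine ⟨Nat.mod_lt _ (Nat.pos_of_ne_zero hL), ?_⟩
    rw [cycleEdge_mod, hC.cycleEdge_add_mem_iff hM]
    simp [hy j hj, Nat.not_even_iff_odd.mpr hodd]
  have hIycard : #(Iy.image (fun j => (j + (2 * i - 1)) % C.length)) = #Iy := by
    refine card_image_of_injOn fun p hp q hq hpq => ?_
    simp only [Iy, coe_filter, mem_range, Set.mem_ofPred_eq] at hp hq
    have := Nat.ModEq.add_right_cancel' _ hpq
    rwa [Nat.ModEq, Nat.mod_eq_of_lt hp.1, Nat.mod_eq_of_lt hq.1] at this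
  obtain ⟨_, hk⟩ := inter_nonempty_of_card_lt_card_add_card hIx hIy (by omega)
  obtain ⟨hkx, hky⟩ := mem_inter.mp hk
  obtain ⟨j, hj, rfl⟩ := mem_image.mp hky
  simp only [Ix, Iy, mem_filter, mem_range, cycleVert_mod] at hkx hj
  let A := ofSeq (fun t => C.cycleVert (j + t)) (fun t => adj_cycleVert_succ hL (j + t))
    (2 * i - 1)
  have hA : IsMPath M A := by
    refine ⟨isPath_ofSeq fun s hs t ht hst => ?_, by rw [length_ofSeq]; exact hodd,
      fun t ht => ?_⟩
    · simp only [Set.mem_Iic] at hs ht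
      rw [hC.1.cycleVert_eq_cycleVert_iff] at hst
      have := Nat.ModEq.add_left_cancel' _ hst
      rwa [Nat.ModEq, Nat.mod_eq_of_lt (by omega), Nat.mod_eq_of_lt (by omega)] at this
    · rw [getElem_edges_ofSeq, ← add_assoc]
      exact (hC.cycleEdge_add_mem_iff hM j t).trans (by simp [hy j hj.2])
  have hPA : ∀ z ∈ P.support, z ∉ A.support := fun z hz hzA => by
    obtain ⟨t, -, rfl⟩ := exists_eq_of_mem_support_ofSeq hzA
    exact hdisj _ hz (cycleVert_mem_support _)
  refine ⟨_, cycleOfPaths P A hj.2 hkx.2.symm, hP.isMCycle_cycleOfPaths hM _ _ hA hPA, ?_, ?_⟩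
  · intro z hz
    rw [support_cycleOfPaths, List.mem_cons, List.mem_append] at hz
    rcases hz with rfl | hz | hz
    · exact .inr (cycleVert_mem_support _)
    · exact .inl hz
    · obtain ⟨t, -, rfl⟩ := exists_eq_of_mem_support_ofSeq hz
      exact .inr (cycleVert_mem_support _)
  · rw [length_cycleOfPaths, length_ofSeq]
    omega

end MCycle
end SimpleGraph.Walk

open SimpleGraph.Walk in
theorem stmt_6_general {V : Type*} [DecidableEq V]
    (G : SimpleGraph V) (X : Finset V)
    (hbip : ∀ u v : V, G.Adj u v → (u ∈ X ↔ v ∉ X))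
    (M : Finset (Sym2 V))
    (hMmatch : ∀ v : V, ∀ e ∈ M, ∀ f ∈ M, v ∈ e → v ∈ f → e = f)
    (n : ℕ) (w : V) (C : G.Walk w w) (hC : C.IsCycle) (hClen : C.length = 2 * n)
    (hCM : 2 * (C.edges.toFinset ∩ M).card = C.length)
    (x y : V) (P : G.Walk x y) (hP : P.IsPath)
    (hPalt : ∀ i (h : i < P.edges.length), P.edges.get ⟨i, h⟩ ∈ M ↔ Even i)
    (hPodd : Odd P.edges.length)
    (hdisj : ∀ v ∈ P.support, v ∉ C.support)
    (hcnt : n < {v : V | v ∈ C.support ∧ G.Adj x v}.ncard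
      + {v : V | v ∈ C.support ∧ G.Adj y v}.ncard) :
    ∀ i : ℕ, 1 ≤ i → i ≤ n →
      ∃ (u : V) (D : G.Walk u u), D.IsCycle ∧
        (∀ z ∈ D.support, z ∈ P.support ∨ z ∈ C.support) ∧
        D.length = (P.length + 1) + 2 * i ∧
        2 * (D.edges.toFinset ∩ M).card = D.length := by
  intro i hi hin
  have hCM : IsMCycle M C := ⟨hC, hCM⟩
  have hPM : IsMPath M P := ⟨hP, by simpa using hPodd, hPalt⟩
  obtain ⟨c, hc⟩ := hCM.exists_cycleEdge_mem_iff hMmatch (X := ↑X) hbip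
  have hxy := end_mem_iff_of_forall_adj (X := ↑X) hbip P
  simp only [Finset.mem_coe] at hc
  simp only [Finset.mem_coe, ← length_edges, Nat.not_even_iff_odd.mpr hPodd, iff_false] at hxy
  -- orient `P` so that the neighbours on `C` of its final vertex are tails of `M`-edges
  by_cases hyc : y ∈ X ↔ c
  · obtain ⟨u, D, hD, hsupp, hlen⟩ := hCM.exists_isMCycle_of_lt_ncard hMmatch hPM.reverse
      (by simpa using hdisj)
      (fun j hj => by have := hbip _ _ hj; have := hc j; tauto)
      (fun j hj => by have := hbip _ _ hj; have := hc j; tauto) (by omega) hi (by omega)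
    exact ⟨u, D, hD.1, by simpa using hsupp, by simpa using hlen, hD.2⟩
  · obtain ⟨u, D, hD, hsupp, hlen⟩ := hCM.exists_isMCycle_of_lt_ncard hMmatch hPM hdisj
      (fun j hj => by have := hbip _ _ hj; have := hc j; tauto)
      (fun j hj => by have := hbip _ _ hj; have := hc j; tauto) (by omega) hi (by omega)
    exact ⟨u, D, hD.1, hsupp, hlen, hD.2⟩

/-- Lemma 1: let `G` be a bipartite graph with a matching `M`, `C` an `M`-cycle of
length `2n`, and `P = P[x,y]` an `M`-path in `G − V(C)`.  If the number of edges of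
`G` between `{x, y}` and `V(C)` exceeds `n`, then `G[V(P) ∪ V(C)]` contains an
`M`-cycle of length `|P| + 2i` for every `1 ≤ i ≤ n`.
An `M`-cycle is a cycle exactly half of whose edges lie in `M`; an `M`-path is an
alternating path starting and ending with edges of `M` (edges at even positions
belong to `M`, and the number of edges is odd). -/
theorem stmt_6 {V : Type*} [Fintype V] [DecidableEq V]
    (G : SimpleGraph V) (X : Finset V)
    (hbip : ∀ u v : V, G.Adj u v → (u ∈ X ↔ v ∉ X))
    (M : Finset (Sym2 V)) (hMsub : ∀ e ∈ M, e ∈ G.edgeSet)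
    (hMmatch : ∀ v : V, ∀ e ∈ M, ∀ f ∈ M, v ∈ e → v ∈ f → e = f)
    (n : ℕ) (w : V) (C : G.Walk w w) (hC : C.IsCycle) (hClen : C.length = 2 * n)
    (hCM : 2 * (C.edges.toFinset ∩ M).card = C.length)
    (x y : V) (P : G.Walk x y) (hP : P.IsPath)
    (hPalt : ∀ i (h : i < P.edges.length), P.edges.get ⟨i, h⟩ ∈ M ↔ Even i)
    (hPodd : Odd P.edges.length)
    (hdisj : ∀ v ∈ P.support, v ∉ C.support)
    (hcnt : n < {v : V | v ∈ C.support ∧ G.Adj x v}.ncard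
      + {v : V | v ∈ C.support ∧ G.Adj y v}.ncard) :
    ∀ i : ℕ, 1 ≤ i → i ≤ n →
      ∃ (u : V) (D : G.Walk u u), D.IsCycle ∧
        (∀ z ∈ D.support, z ∈ P.support ∨ z ∈ C.support) ∧
        D.length = (P.length + 1) + 2 * i ∧
        2 * (D.edges.toFinset ∩ M).card = D.length :=
  stmt_6_general G X hbip M hMmatch n w C hC hClen hCM x y P hP hPalt hPodd hdisj hcnt
end

section
/- Let G be a bipartite graph with matching M, let C be an M-cycle, and let x, y be vertices of G − V(C) in different partite sets. If e_G({x,y}, C) ≥ |C|/2 + 1, then there is an edge uv of C not in M with xu, yv ∈ E(G) (i.e., the pair can be 'inserted' along a non-matching edge of C). -/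
/-!
Suppose no non-`M` edge `uv` of `C` has `xu, yv ∈ E(G)`. Since `M` is a matching, every vertex
of `C` lies on a non-`M` edge of `C`, so we may send each neighbour of `x` or `y` on `C` to such an
edge. This map is injective: two neighbours joined by a non-`M` edge of `C` would either be
neighbours of the same vertex among `x, y` (impossible, `G` being bipartite) or give the forbidden
insertion. As `x` and `y` lie in different partite sets they have no common neighbour, hence
`e_G({x,y}, C)` is at most the number `|C|/2` of non-`M` edges of `C`.
-/

open SimpleGraph
open scoped Finset

section

variable {V : Type*} {G : SimpleGraph V}

lemma SimpleGraph.Walk.IsCycle.exists_ne_mk_mem_edges {w v : V} {C : G.Walk w w}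
    (hC : C.IsCycle) (hv : v ∈ C.support) :
    ∃ a b, a ≠ b ∧ s(v, a) ∈ C.edges ∧ s(v, b) ∈ C.edges := by
  obtain ⟨a, b, hab, hnbr⟩ := Set.ncard_eq_two.mp (hC.ncard_neighborSet_toSubgraph_eq_two hv)
  have hmem : ∀ c ∈ C.toSubgraph.neighborSet v, s(v, c) ∈ C.edges := fun _ =>
    Walk.adj_toSubgraph_iff_mem_edges.mp
  exact ⟨a, b, hab, hmem a (by simp [hnbr]), hmem b (by simp [hnbr])⟩

lemma SimpleGraph.Walk.IsCycle.exists_mem_edges_notMem {w v : V} {C : G.Walk w w}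
    (hC : C.IsCycle) (hv : v ∈ C.support) {M : Set (Sym2 V)}
    (hM : ∀ e ∈ M, ∀ f ∈ M, v ∈ e → v ∈ f → e = f) :
    ∃ e ∈ C.edges, e ∉ M ∧ v ∈ e := by
  obtain ⟨a, b, hab, ha, hb⟩ := hC.exists_ne_mk_mem_edges hv
  by_cases haM : s(v, a) ∈ M
  · refine ⟨s(v, b), hb, fun hbM => hab ?_, Sym2.mem_mk_left v b⟩
    exact Sym2.congr_right.mp (hM _ haM _ hbM (Sym2.mem_mk_left v a) (Sym2.mem_mk_left v b))
  · exact ⟨s(v, a), ha, haM, Sym2.mem_mk_left v a⟩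

lemma SimpleGraph.Walk.IsTrail.card_edges_sdiff_add_card_edges_inter [DecidableEq V] {u v : V}
    {C : G.Walk u v} (hC : C.IsTrail) (M : Finset (Sym2 V)) :
    #(C.edges.toFinset \ M) + #(C.edges.toFinset ∩ M) = C.length := by
  rw [Finset.card_sdiff_add_card_inter, List.toFinset_card_of_nodup hC.edges_nodup,
    Walk.length_edges]

lemma card_le_card_of_forall_exists_mem_sym2 {S : Finset V} {A : Finset (Sym2 V)}
    (hcover : ∀ v ∈ S, ∃ e ∈ A, v ∈ e)
    (hsep : ∀ a ∈ S, ∀ b ∈ S, s(a, b) ∈ A → a = b) : #S ≤ #A := by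
  refine Finset.card_le_card_of_forall_subsingleton (· ∈ ·) hcover fun e he a ha b hb => ?_
  by_contra hne
  obtain rfl : e = s(a, b) := (Sym2.mem_and_mem_iff hne).mp ⟨ha.2, hb.2⟩
  exact hne (hsep a ha.1 b hb.1 he)

section Bipartite

variable {X : Finset V} (hbip : ∀ u v : V, G.Adj u v → (u ∈ X ↔ v ∉ X))
include hbip

lemma adj_and_adj_of_adj_or_adj {x y a b : V} (hab : G.Adj a b) (ha : G.Adj x a ∨ G.Adj y a)
    (hb : G.Adj x b ∨ G.Adj y b) : G.Adj x a ∧ G.Adj y b ∨ G.Adj x b ∧ G.Adj y a := by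
  have := hbip a b hab
  have := hbip x a; have := hbip x b; have := hbip y a; have := hbip y b
  tauto

lemma not_adj_of_adj_of_mem_iff_notMem {x y v : V} (hxy : x ∈ X ↔ y ∉ X) (hx : G.Adj x v) :
    ¬G.Adj y v :=
  fun hy => by have := hbip x v hx; have := hbip y v hy; tauto

end Bipartite

end

theorem stmt_11_general {V : Type*} [DecidableEq V]
    (G : SimpleGraph V) (X : Finset V)
    (hbip : ∀ u v : V, G.Adj u v → (u ∈ X ↔ v ∉ X))
    (M : Finset (Sym2 V))
    (hMmatch : ∀ v : V, ∀ e ∈ M, ∀ f ∈ M, v ∈ e → v ∈ f → e = f)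
    (w : V) (C : G.Walk w w) (hC : C.IsCycle)
    (hCM : 2 * (C.edges.toFinset ∩ M).card = C.length)
    (x y : V)
    (hxy : x ∈ X ↔ y ∉ X)
    (hcnt : C.length + 2 ≤ 2 * ({v : V | v ∈ C.support ∧ G.Adj x v}.ncard
      + {v : V | v ∈ C.support ∧ G.Adj y v}.ncard)) :
    ∃ u v : V, s(u, v) ∈ C.edges ∧ s(u, v) ∉ M ∧ G.Adj x u ∧ G.Adj y v := by
  classical
  by_contra! hins
  set N := fun z => {v ∈ C.support.toFinset | G.Adj z v}
  have hN : ∀ z, {v : V | v ∈ C.support ∧ G.Adj z v}.ncard = #(N z) := fun z => by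
    rw [← Set.ncard_coe_finset]; congr 1; ext; simp [N]
  have hmem : ∀ {c}, c ∈ N x ∪ N y ↔ c ∈ C.support ∧ (G.Adj x c ∨ G.Adj y c) := by
    simp [N, and_or_left]
  have hdisj : Disjoint (N x) (N y) := Finset.disjoint_left.mpr fun v hvx hvy =>
    not_adj_of_adj_of_mem_iff_notMem hbip hxy (Finset.mem_filter.mp hvx).2
      (Finset.mem_filter.mp hvy).2
  have hle : #(N x ∪ N y) ≤ #(C.edges.toFinset \ M) := by
    refine card_le_card_of_forall_exists_mem_sym2 (fun v hv => ?_) (fun a ha b hb hab => ?_)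
    · obtain ⟨e, he, heM, hve⟩ := hC.exists_mem_edges_notMem (hmem.mp hv).1 (hMmatch v)
      exact ⟨e, Finset.mem_sdiff.mpr ⟨List.mem_toFinset.mpr he, heM⟩, hve⟩
    · simp only [Finset.mem_sdiff, List.mem_toFinset] at hab
      rcases adj_and_adj_of_adj_or_adj hbip (C.adj_of_mem_edges hab.1) (hmem.mp ha).2
        (hmem.mp hb).2 with ⟨hxa, hyb⟩ | ⟨hxb, hya⟩
      · exact (hins a b hab.1 hab.2 hxa hyb).elim
      · rw [Sym2.eq_swap] at hab
        exact (hins b a hab.1 hab.2 hxb hya).elim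
  have hA := hC.isTrail.card_edges_sdiff_add_card_edges_inter M
  rw [Finset.card_union_of_disjoint hdisj] at hle
  rw [hN, hN] at hcnt
  omega

/-- Insertion lemma for cycles: let `G` be a bipartite graph with matching `M`,
`C` an `M`-cycle, and `x, y` vertices of `G − V(C)` in different partite sets.
If `e_G({x,y}, C) ≥ |C|/2 + 1` (stated as `2·e_G({x,y},C) ≥ |C| + 2`, where
`|C|` is the number of vertices of `C`), then there is an edge `uv` of `C` not
in `M` with `xu, yv ∈ E(G)`. -/
theorem stmt_11 {V : Type*} [Fintype V] [DecidableEq V]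
    (G : SimpleGraph V) (X : Finset V)
    (hbip : ∀ u v : V, G.Adj u v → (u ∈ X ↔ v ∉ X))
    (M : Finset (Sym2 V)) (hMsub : ∀ e ∈ M, e ∈ G.edgeSet)
    (hMmatch : ∀ v : V, ∀ e ∈ M, ∀ f ∈ M, v ∈ e → v ∈ f → e = f)
    (w : V) (C : G.Walk w w) (hC : C.IsCycle)
    (hCM : 2 * (C.edges.toFinset ∩ M).card = C.length)
    (x y : V) (hx : x ∉ C.support) (hy : y ∉ C.support)
    (hxy : x ∈ X ↔ y ∉ X)
    (hcnt : C.length + 2 ≤ 2 * ({v : V | v ∈ C.support ∧ G.Adj x v}.ncard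
      + {v : V | v ∈ C.support ∧ G.Adj y v}.ncard)) :
    ∃ u v : V, s(u, v) ∈ C.edges ∧ s(u, v) ∉ M ∧ G.Adj x u ∧ G.Adj y v :=
  stmt_11_general G X hbip M hMmatch w C hC hCM x y hxy hcnt
end

section
/- Let G be a bipartite graph with matching M, let P be an M-path, and let x, y be vertices of G − V(P) in different partite sets. If e_G({x,y}, P) ≥ |P|/2 + 2, then there exists an edge uv of P not in M such that xu and yv are both edges of G. -/
/-!
Index the vertices of `P` as `0, …, n` with `n = 2k + 1`, and let `S` be the set of indices
whose vertex is adjacent to `x` or to `y`. Since `x` and `y` lie on different sides, no vertex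
is adjacent to both, so `#S = e({x,y}, P)`. If both ends of a non-matching edge `(i, i+1)`
(`i` odd) were in `S`, bipartiteness would force `x` and `y` onto different ends, giving the
required edge. Otherwise `S` meets each of the `k + 2` blocks `{0}, {1,2}, …, {2k-1,2k}, {2k+1}`
at most once, so `2 e({x,y}, P) ≤ 2k + 4 = |P| + 2`.
-/

open Finset

theorem Finset.card_le_of_forall_odd_succ_notMem {S : Finset ℕ} {k : ℕ}
    (hS : ∀ i ∈ S, i ≤ 2 * k + 1) (hgap : ∀ i, Odd i → i ∈ S → i + 1 ∉ S) :
    #S ≤ k + 2 := by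
  have hmaps : ∀ i ∈ S, (i + 1) / 2 ∈ range (k + 2) := fun i hi => by
    have := hS i hi
    rw [mem_range]
    omega
  have hinj : Set.InjOn (fun i => (i + 1) / 2) S := by
    intro i hi j hj hij
    have := hS i hi
    have := hS j hj
    have hij : (i + 1) / 2 = (j + 1) / 2 := hij
    by_contra hne
    obtain ⟨rfl, hodd⟩ | ⟨rfl, hodd⟩ : (j = i + 1 ∧ i % 2 = 1) ∨ (i = j + 1 ∧ j % 2 = 1) := by
      omega
    · exact hgap i (Nat.odd_iff.mpr hodd) hi hj
    · exact hgap j (Nat.odd_iff.mpr hodd) hj hi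
  simpa using card_le_card_of_injOn _ hmaps hinj

namespace SimpleGraph

variable {V : Type*} {G : SimpleGraph V}

theorem Walk.IsPath.ncard_support_filter {u v : V} {p : G.Walk u v} (hp : p.IsPath)
    (q : V → Prop) [DecidablePred q] :
    {w | w ∈ p.support ∧ q w}.ncard = #{i ∈ range (p.length + 1) | q (p.getVert i)} := by
  have himage : {w | w ∈ p.support ∧ q w} =
      p.getVert '' ↑({i ∈ range (p.length + 1) | q (p.getVert i)}) := by
    ext w
    simp only [Set.mem_ofPred_eq, coe_filter, mem_range, Set.mem_image,
      Walk.mem_support_iff_exists_getVert]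
    constructor
    · rintro ⟨⟨i, rfl, hi⟩, hq⟩
      exact ⟨i, ⟨by omega, hq⟩, rfl⟩
    · rintro ⟨i, ⟨hi, hq⟩, rfl⟩
      exact ⟨⟨i, rfl, by omega⟩, hq⟩
  rw [himage, Set.InjOn.ncard_image, Set.ncard_coe_finset]
  intro i hi j hj hij
  simp only [coe_filter, mem_range, Set.mem_ofPred_eq] at hi hj
  exact hp.getVert_injOn (show i ≤ p.length by omega) (show j ≤ p.length by omega) hij

theorem not_adj_and_adj_of_mem_iff_notMem {X : Set V}
    (hbip : ∀ u v, G.Adj u v → (u ∈ X ↔ v ∉ X)) {x y w : V} (hxy : x ∈ X ↔ y ∉ X) :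
    ¬(G.Adj x w ∧ G.Adj y w) := by
  rintro ⟨hx, hy⟩
  have := hbip _ _ hx
  have := hbip _ _ hy
  tauto

theorem exists_mk_eq_and_adj_and_adj_of_adj {X : Set V}
    (hbip : ∀ u v, G.Adj u v → (u ∈ X ↔ v ∉ X)) {x y u v : V} (huv : G.Adj u v)
    (hu : G.Adj x u ∨ G.Adj y u) (hv : G.Adj x v ∨ G.Adj y v) :
    ∃ u' v', s(u', v') = s(u, v) ∧ G.Adj x u' ∧ G.Adj y v' := by
  have := hbip _ _ huv
  rcases hu with hu | hu <;> rcases hv with hv | hv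
  · have := hbip _ _ hu; have := hbip _ _ hv; tauto
  · exact ⟨u, v, rfl, hu, hv⟩
  · exact ⟨v, u, Sym2.eq_swap, hv, hu⟩
  · have := hbip _ _ hu; have := hbip _ _ hv; tauto

end SimpleGraph

open SimpleGraph

theorem stmt_12_general {V : Type*}
    (G : SimpleGraph V) (X : Finset V)
    (hbip : ∀ u v : V, G.Adj u v → (u ∈ X ↔ v ∉ X))
    (M : Finset (Sym2 V))
    (a b : V) (P : G.Walk a b) (hP : P.IsPath)
    (hPalt : ∀ i (h : i < P.edges.length), P.edges.get ⟨i, h⟩ ∈ M ↔ Even i)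
    (hPodd : Odd P.edges.length)
    (x y : V)
    (hxy : x ∈ X ↔ y ∉ X)
    (hcnt : (P.length + 1) + 4 ≤ 2 * ({v : V | v ∈ P.support ∧ G.Adj x v}.ncard
      + {v : V | v ∈ P.support ∧ G.Adj y v}.ncard)) :
    ∃ u v : V, s(u, v) ∈ P.edges ∧ s(u, v) ∉ M ∧ G.Adj x u ∧ G.Adj y v := by
  classical
  by_contra! hcon
  obtain ⟨k, hk⟩ := P.length_edges ▸ hPodd
  set S := {i ∈ range (P.length + 1) | G.Adj x (P.getVert i) ∨ G.Adj y (P.getVert i)}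
  have hcard : {v | v ∈ P.support ∧ G.Adj x v}.ncard
      + {v | v ∈ P.support ∧ G.Adj y v}.ncard = #S := by
    have hdisj : Disjoint {i ∈ range (P.length + 1) | G.Adj x (P.getVert i)}
        {i ∈ range (P.length + 1) | G.Adj y (P.getVert i)} :=
      disjoint_filter.mpr fun i _ hxi hyi =>
        not_adj_and_adj_of_mem_iff_notMem (X := (X : Set V)) hbip hxy ⟨hxi, hyi⟩
    rw [hP.ncard_support_filter, hP.ncard_support_filter, ← card_union_of_disjoint hdisj,
      ← filter_or]
  have hgap : ∀ i, Odd i → i ∈ S → i + 1 ∉ S := by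
    intro i hodd hi hi1
    simp only [S, mem_filter, mem_range] at hi hi1
    have hlt : i < P.edges.length := by rw [P.length_edges]; omega
    obtain ⟨u, v, huv, hxu, hyv⟩ := exists_mk_eq_and_adj_and_adj_of_adj (X := (X : Set V)) hbip
      (P.adj_getVert_succ (by omega)) hi.2 hi1.2
    refine hcon u v ?_ ?_ hxu hyv <;> rw [huv, ← Walk.getElem_edges hlt]
    · exact List.getElem_mem hlt
    · exact fun hM => Nat.not_even_iff_odd.mpr hodd ((hPalt i hlt).mp hM)
  have hS : ∀ i ∈ S, i ≤ 2 * k + 1 := fun i hi => by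
    simp only [S, mem_filter, mem_range] at hi
    omega
  have := card_le_of_forall_odd_succ_notMem hS hgap
  omega

/-- Insertion lemma for paths: let `G` be a bipartite graph with matching `M`,
`P` an `M`-path (alternating, starting and ending with edges of `M`), and
`x, y` vertices of `G − V(P)` in different partite sets.  If
`e_G({x,y}, P) ≥ |P|/2 + 2` (stated as `2·e_G({x,y},P) ≥ |P| + 4`, where
`|P| = P.length + 1` is the number of vertices of `P`), then there is an edge
`uv` of `P` not in `M` with `xu, yv ∈ E(G)`. -/
theorem stmt_12 {V : Type*} [Fintype V] [DecidableEq V]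
    (G : SimpleGraph V) (X : Finset V)
    (hbip : ∀ u v : V, G.Adj u v → (u ∈ X ↔ v ∉ X))
    (M : Finset (Sym2 V)) (hMsub : ∀ e ∈ M, e ∈ G.edgeSet)
    (hMmatch : ∀ v : V, ∀ e ∈ M, ∀ f ∈ M, v ∈ e → v ∈ f → e = f)
    (a b : V) (P : G.Walk a b) (hP : P.IsPath)
    (hPalt : ∀ i (h : i < P.edges.length), P.edges.get ⟨i, h⟩ ∈ M ↔ Even i)
    (hPodd : Odd P.edges.length)
    (x y : V) (hx : x ∉ P.support) (hy : y ∉ P.support)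
    (hxy : x ∈ X ↔ y ∉ X)
    (hcnt : (P.length + 1) + 4 ≤ 2 * ({v : V | v ∈ P.support ∧ G.Adj x v}.ncard
      + {v : V | v ∈ P.support ∧ G.Adj y v}.ncard)) :
    ∃ u v : V, s(u, v) ∈ P.edges ∧ s(u, v) ∉ M ∧ G.Adj x u ∧ G.Adj y v :=
  stmt_12_general G X hbip M a b P hP hPalt hPodd x y hxy hcnt
end

section
/- Let D be the digraph obtained from the complete bipartite graph K_{(n−1)/2,(n+1)/2} (n odd) by replacing every edge with two opposite arcs. Then min{d⁺(u) + d⁻(v) : u ≠ v, (u,v) ∉ A(D)} = n − 1 and D has no directed 2-factor. -/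
/-!
On each side of `K_{a,b}` every vertex has the whole opposite side as out- and in-neighbourhood,
so the non-adjacent pairs are the pairs on one side, and `d⁺(u) + d⁻(v)` is `2b` or `2a`, with
minimum `2a = n - 1` for `a = (n - 1)/2 < b = (n + 1)/2`. A directed 2-factor is a permutation
moving every vertex across the bipartition; restricted to the larger side it would inject that
side into the smaller one.
-/

open Finset

section Bipartition

variable {α β : Type*} [Fintype α] [Fintype β]

lemma card_filter_isLeft_ne (c : Bool) :
    #{w : α ⊕ β | w.isLeft ≠ c} = if c then Fintype.card β else Fintype.card α := by
  rw [Finset.card_filter, Fintype.sum_sum_type]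
  cases c <;> simp

lemma card_filter_ne_isLeft (c : Bool) :
    #{w : α ⊕ β | c ≠ w.isLeft} = if c then Fintype.card β else Fintype.card α := by
  simp_rw [ne_comm (a := c)]
  exact card_filter_isLeft_ne c

lemma card_le_of_injective_of_forall_isLeft {γ : Type*} (f : β → α ⊕ γ)
    (hf : Function.Injective f) (hleft : ∀ b, (f b).isLeft) :
    Fintype.card β ≤ Fintype.card α := by
  refine Fintype.card_le_of_injective (fun b => (f b).getLeft (hleft b)) fun x y hxy => hf ?_
  rw [← Sum.inl_getLeft (f x) (hleft x), ← Sum.inl_getLeft (f y) (hleft y)]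
  exact congrArg Sum.inl hxy

lemma not_exists_perm_forall_isLeft_ne (hcard : Fintype.card α < Fintype.card β) :
    ¬ ∃ σ : Equiv.Perm (α ⊕ β), ∀ v, v.isLeft ≠ (σ v).isLeft := by
  rintro ⟨σ, hσ⟩
  have hleft : ∀ b : β, (σ (Sum.inr b)).isLeft := fun b => by
    simpa using (hσ (Sum.inr b)).symm
  exact hcard.not_ge
    (card_le_of_injective_of_forall_isLeft _ (σ.injective.comp Sum.inr_injective) hleft)

end Bipartition

/-- Sharpness example: let `D` be the digraph obtained from the complete
bipartite graph `K_{(n−1)/2,(n+1)/2}` (`n` odd) by replacing every edge with two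
opposite arcs; its vertex type is `Fin ((n−1)/2) ⊕ Fin ((n+1)/2)` and there is
an arc between two vertices iff they lie on opposite sides.  Then
`min{d⁺(u) + d⁻(v) : u ≠ v, (u,v) ∉ A(D)} = n − 1` and `D` has no directed
2-factor (encoded as: no permutation `σ` with an arc from every vertex to its
image; any such `σ` is automatically fixed-point-free). -/
theorem stmt_18 (n : ℕ) (hn : Odd n) (h3 : 3 ≤ n) :
    (∀ u v : Fin ((n - 1) / 2) ⊕ Fin ((n + 1) / 2), u ≠ v →
      ¬ (u.isLeft ≠ v.isLeft) →
      n - 1 ≤ (Finset.univ.filter (fun w : Fin ((n - 1) / 2) ⊕ Fin ((n + 1) / 2) =>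
          u.isLeft ≠ w.isLeft)).card
        + (Finset.univ.filter (fun w : Fin ((n - 1) / 2) ⊕ Fin ((n + 1) / 2) =>
          w.isLeft ≠ v.isLeft)).card) ∧
    (∃ u v : Fin ((n - 1) / 2) ⊕ Fin ((n + 1) / 2), u ≠ v ∧
      ¬ (u.isLeft ≠ v.isLeft) ∧
      (Finset.univ.filter (fun w : Fin ((n - 1) / 2) ⊕ Fin ((n + 1) / 2) =>
          u.isLeft ≠ w.isLeft)).card
        + (Finset.univ.filter (fun w : Fin ((n - 1) / 2) ⊕ Fin ((n + 1) / 2) =>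
          w.isLeft ≠ v.isLeft)).card = n - 1) ∧
    ¬ ∃ σ : Equiv.Perm (Fin ((n - 1) / 2) ⊕ Fin ((n + 1) / 2)),
      ∀ v, v.isLeft ≠ (σ v).isLeft := by
  obtain ⟨k, rfl⟩ := hn
  have hleft : (2 * k + 1 - 1) / 2 = k := by omega
  have hright : (2 * k + 1 + 1) / 2 = k + 1 := by omega
  simp only [card_filter_isLeft_ne, card_filter_ne_isLeft, Fintype.card_fin, hleft, hright]
  refine ⟨fun u v _ hsame => ?_, ?_, not_exists_perm_forall_isLeft_ne (by simp only [Fintype.card_fin]; omega)⟩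
  · rw [← not_not.mp hsame]
    split_ifs <;> omega
  · refine ⟨Sum.inr ⟨0, by omega⟩, Sum.inr ⟨1, by omega⟩, by simp, by simp, ?_⟩
    simp only [Sum.isLeft_inr, Bool.false_eq_true, if_false]
    omega
end

section
/- Let G be a balanced bipartite graph of order 2n with perfect matching M such that no subgraph of G contains an alternating cycle of length 6 with respect to M. Fix vertices x₀ ∈ X and y₀ ∈ Y lying on a common M-path of order 4, and let H' be the rest of the graph. Then the sets Y_{x₀} = N(x₀) ∩ V(H'), X_{y₀} = N(y₀) ∩ V(H'), and their M-partners X_{x₀}, Y_{y₀} are pairwise disjoint. -/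
open SimpleGraph

set_option maxHeartbeats 1000000 in
/-- Let `G` be a balanced bipartite graph of order `2n` with partite sets `X`,
`Y = Xᶜ` and perfect matching `M`, containing no alternating 6-cycle with
respect to `M`.  Fix `x₀ ∈ X`, `y₀ ∈ Y` joined by an `M`-path `P` of order 4,
and let `H' = G − V(P)`.  Then the sets `Y_{x₀} = N(x₀) ∩ V(H')`,
`X_{y₀} = N(y₀) ∩ V(H')`, and their `M`-partner sets `X_{x₀}`, `Y_{y₀}` are
pairwise disjoint. -/
theorem stmt_19 {V : Type*} [Fintype V] [DecidableEq V] (n : ℕ)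
    (G : SimpleGraph V) [DecidableRel G.Adj] (X : Finset V)
    (hbip : ∀ u v : V, G.Adj u v → (u ∈ X ↔ v ∉ X))
    (hcardV : Fintype.card V = 2 * n) (hX : X.card = n)
    (M : Finset (Sym2 V)) (hMsub : ∀ e ∈ M, e ∈ G.edgeSet)
    (hMpm : ∀ v : V, ∃! e, e ∈ M ∧ v ∈ e)
    (hno6 : ¬ ∃ (u : V) (C : G.Walk u u), C.IsCycle ∧ C.length = 6 ∧
      (C.edges.toFinset ∩ M).card = 3)
    (x₀ y₀ : V) (hx₀ : x₀ ∈ X) (hy₀ : y₀ ∉ X)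
    (P : G.Walk x₀ y₀) (hP : P.IsPath) (hPlen : P.length = 3)
    (hPalt : ∀ i (h : i < P.edges.length), P.edges.get ⟨i, h⟩ ∈ M ↔ Even i) :
    ([{v : V | v ∉ P.support ∧ G.Adj x₀ v},                                -- Y_{x₀}
      {u : V | ∃ v, (v ∉ P.support ∧ G.Adj x₀ v) ∧ s(u, v) ∈ M},          -- X_{x₀}
      {v : V | v ∉ P.support ∧ G.Adj y₀ v},                               -- X_{y₀}
      {u : V | ∃ v, (v ∉ P.support ∧ G.Adj y₀ v) ∧ s(u, v) ∈ M}]          -- Y_{y₀}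
      : List (Set V)).Pairwise Disjoint := by
  have hMadj : ∀ u v : V, s(u, v) ∈ M → G.Adj u v := fun u v h => (hMsub _ h)
  cases P with
  | nil => simp at hPlen
  | cons h1 Q =>
  cases Q with
  | nil => simp at hPlen
  | cons h2 Q =>
  cases Q with
  | nil => simp at hPlen
  | cons h3 Q =>
  cases Q with
  | cons h4 Q => simp [Walk.length_cons] at hPlen
  | nil =>
  rename_i a b
  -- distinctness of path vertices
  simp [Walk.isPath_def, List.nodup_cons] at hP
  obtain ⟨⟨hxa, hxb, hxy⟩, ⟨hab, hay⟩, hby⟩ := hP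
  -- matching edges on the path
  have e0 : s(x₀, a) ∈ M := by
    have := (hPalt 0 (by simp)).mpr (by decide)
    simpa using this
  have e2 : s(b, y₀) ∈ M := by
    have := (hPalt 2 (by simp)).mpr (by decide)
    simpa using this
  -- uniqueness of matching edges at x₀, y₀, b
  have hux : ∀ e ∈ M, x₀ ∈ e → e = s(x₀, a) := by
    obtain ⟨e, he, hun⟩ := hMpm x₀
    intro e' he' hxe'
    rw [hun e' ⟨he', hxe'⟩, hun s(x₀, a) ⟨e0, by simp⟩]
  have huy : ∀ e ∈ M, y₀ ∈ e → e = s(b, y₀) := by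
    obtain ⟨e, he, hun⟩ := hMpm y₀
    intro e' he' hye'
    rw [hun e' ⟨he', hye'⟩, hun s(b, y₀) ⟨e2, by simp⟩]
  have hub : ∀ e ∈ M, b ∈ e → e = s(b, y₀) := by
    obtain ⟨e, he, hun⟩ := hMpm b
    intro e' he' hbe'
    rw [hun e' ⟨he', hbe'⟩, hun s(b, y₀) ⟨e2, by simp⟩]
  -- the key lemma: no matching edge joins a neighbor of x₀ and a neighbor of y₀ outside P
  have key : ∀ v u : V,
      v ∉ (Walk.cons h1 (Walk.cons h2 (Walk.cons h3 Walk.nil))).support →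
      u ∉ (Walk.cons h1 (Walk.cons h2 (Walk.cons h3 Walk.nil))).support →
      G.Adj x₀ v → G.Adj y₀ u → s(v, u) ∉ M := by
    intro v u hv hu hxv hyu hM
    simp only [Walk.support_cons, Walk.support_nil, List.mem_cons,
      List.not_mem_nil, or_false, not_or, List.mem_singleton] at hv hu
    obtain ⟨hvx, hva, hvb, hvy⟩ := hv
    obtain ⟨hux', hua, hub', huy'⟩ := hu

    have hvu : G.Adj v u := hMadj v u hM
    have hvune : v ≠ u := hvu.ne
    -- symmetric inequality facts
    have sxa : a ≠ x₀ := fun h => hxa h.symm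
    have sxb : b ≠ x₀ := fun h => hxb h.symm
    have sxy : y₀ ≠ x₀ := fun h => hxy h.symm
    have sab : b ≠ a := fun h => hab h.symm
    have say : y₀ ≠ a := fun h => hay h.symm
    have sby : y₀ ≠ b := fun h => hby h.symm
    have svx : x₀ ≠ v := fun h => hvx h.symm
    have sva : a ≠ v := fun h => hva h.symm
    have svb : b ≠ v := fun h => hvb h.symm
    have svy : y₀ ≠ v := fun h => hvy h.symm
    have sux : x₀ ≠ u := fun h => hux' h.symm
    have sua : a ≠ u := fun h => hua h.symm
    have sub : b ≠ u := fun h => hub' h.symm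
    have suy : y₀ ≠ u := fun h => huy' h.symm
    have suv : u ≠ v := fun h => hvune h.symm
    have hnxv : s(x₀, v) ∉ M := fun h => by
      have := hux _ h (by simp)
      simp only [Sym2.eq_iff] at this
      tauto
    have hnuy : s(u, y₀) ∉ M := fun h => by
      have := huy _ h (by simp)
      simp only [Sym2.eq_iff] at this
      tauto
    have hnba : s(b, a) ∉ M := fun h => by
      have := hub _ h (by simp)
      simp only [Sym2.eq_iff] at this
      tauto
    apply hno6
    refine ⟨x₀, Walk.cons hxv (Walk.cons hvu (Walk.cons hyu.symm (Walk.cons h3.symm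
      (Walk.cons h2.symm (Walk.cons h1.symm Walk.nil))))), ?_, by simp, ?_⟩
    · refine ⟨⟨⟨?_⟩, by simp⟩, ?_⟩
      · simp [Walk.edges_cons, List.nodup_cons, Sym2.eq_iff, hvune, hvx, hva, hvb, hvy, hux', hua, hub', huy', svx, sva, svb, svy, sux, sua, sub, suy, suv, hxa, hxb, hxy, hab, hay, hby, sxa, sxb, sxy, sab, say, sby]
      · simp [Walk.support_cons, List.nodup_cons, hvune, hvx, hva, hvb, hvy, hux', hua, hub', huy', svx, sva, svb, svy, sux, sua, sub, suy, suv, hxa, hxb, hxy, hab, hay, hby, sxa, sxb, sxy, sab, say, sby]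
    · have hset : (Walk.cons hxv (Walk.cons hvu (Walk.cons hyu.symm (Walk.cons h3.symm
          (Walk.cons h2.symm (Walk.cons h1.symm Walk.nil)))))).edges.toFinset ∩ M
          = {s(v, u), s(b, y₀), s(x₀, a)} := by
        ext e
        simp only [Finset.mem_inter, List.mem_toFinset, Walk.edges_cons, Walk.edges_nil,
          List.mem_cons, List.not_mem_nil, or_false, Finset.mem_insert, Finset.mem_singleton]
        constructor
        · rintro ⟨(rfl | rfl | rfl | rfl | rfl | rfl), hm⟩
          · exact absurd hm hnxv
          · tauto
          · exact absurd hm hnuy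
          · exact Or.inr (Or.inl (Sym2.eq_swap))
          · exact absurd hm hnba
          · exact Or.inr (Or.inr (Sym2.eq_swap))
        · rintro (rfl | rfl | rfl)
          · exact ⟨by tauto, hM⟩
          · exact ⟨by rw [Sym2.eq_swap]; tauto, e2⟩
          · exact ⟨by rw [Sym2.eq_swap]; tauto, e0⟩
      rw [hset]
      rw [Finset.card_insert_of_notMem (by
        simp [Sym2.eq_iff, hvb, hvy, hvx, hva]), Finset.card_insert_of_notMem (by
        simp [Sym2.eq_iff, sxb, sab, sxy]), Finset.card_singleton]
  -- now the pairwise disjointness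
  have hAnX : ∀ v, G.Adj x₀ v → v ∉ X := fun v h => (hbip x₀ v h).mp hx₀
  have hCX : ∀ v, G.Adj y₀ v → v ∈ X := by
    intro v h
    by_contra hv
    exact hy₀ ((hbip y₀ v h).mpr hv)
  have hBX : ∀ z v : V, G.Adj x₀ v → s(z, v) ∈ M → z ∈ X := by
    intro z v hv hm
    exact (hbip z v (hMadj z v hm)).mpr (hAnX v hv)
  have hDnX : ∀ z u : V, G.Adj y₀ u → s(z, u) ∈ M → z ∉ X := by
    intro z u hu hm hz
    exact (hbip z u (hMadj z u hm)).mp hz (hCX u hu)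
  refine List.Pairwise.cons ?_ (List.Pairwise.cons ?_ (List.Pairwise.cons ?_ (List.Pairwise.cons (by simp) List.Pairwise.nil)))
  · intro S hS
    simp only [List.mem_cons, List.not_mem_nil, or_false] at hS
    rcases hS with rfl | rfl | rfl
    · -- A vs B
      rw [Set.disjoint_left]
      rintro z ⟨hzs, hza⟩ ⟨v', ⟨hv's, hv'a⟩, hm⟩
      exact hAnX z hza (hBX z v' hv'a hm)
    · -- A vs C
      rw [Set.disjoint_left]
      rintro z ⟨hzs, hza⟩ ⟨hzs', hza'⟩
      exact hAnX z hza (hCX z hza')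
    · -- A vs D
      rw [Set.disjoint_left]
      rintro z ⟨hzs, hza⟩ ⟨u, ⟨hus, hua⟩, hm⟩
      exact key z u hzs hus hza hua hm
  · intro S hS
    simp only [List.mem_cons, List.not_mem_nil, or_false] at hS
    rcases hS with rfl | rfl
    · -- B vs C
      rw [Set.disjoint_left]
      rintro z ⟨v', ⟨hv's, hv'a⟩, hm⟩ ⟨hzs, hza⟩
      exact key v' z hv's hzs hv'a hza (Sym2.eq_swap ▸ hm)
    · -- B vs D
      rw [Set.disjoint_left]
      rintro z ⟨v', ⟨hv's, hv'a⟩, hm⟩ ⟨u, ⟨hus, hua⟩, hm'⟩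
      exact hDnX z u hua hm' (hBX z v' hv'a hm)
  · intro S hS
    simp only [List.mem_cons, List.not_mem_nil, or_false, List.mem_singleton] at hS
    subst hS
    -- C vs D
    rw [Set.disjoint_left]
    rintro z ⟨hzs, hza⟩ ⟨u, ⟨hus, hua⟩, hm⟩
    exact hDnX z u hua hm (hCX z hza)
end
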